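/- arXiv:2005.01626 — 7 statements merged into one kernel-verified Lean document; each statement's English description precedes it below -/
import Mathlib

section
/- Let A be an abelian category and M a nonzero object that is left Schurian for two collections C and D of objects of A. Then M is left Schurian for C * D, the collection of objects X admitting a short exact sequence 0 → C → X → D → 0 with C in C and D in D. -/
open CategoryTheory CategoryTheory.Limits

namespace MonobrickPaper

universe v u

variable {A : Type u} [Category.{v} A] [Abelian A]

/-- A set of objects closed under isomorphisms (models a set of iso-classes). -/
def IsoClosedSet (S : Set A) : Prop :=
  ∀ ⦃X Y : A⦄, (X ≅ Y) → X ∈ S → Y ∈ S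

/-- A brick: an object whose endomorphism ring is a division ring, phrased as:
nonzero and every nonzero endomorphism is an isomorphism. -/
def IsBrick (X : A) : Prop :=
  ¬ IsZero X ∧ ∀ f : X ⟶ X, f = 0 ∨ IsIso f

/-- A subcategory (set of objects) closed under extensions (containing the zero objects). -/
def ExtClosed (E : Set A) : Prop :=
  (∀ X : A, IsZero X → X ∈ E) ∧
  ∀ (S : ShortComplex A), S.ShortExact → S.X₁ ∈ E → S.X₃ ∈ E → S.X₂ ∈ E

/-- `M` is a simple object of `E`: nonzero, and admits no short exact sequence
`0 → L → M → N → 0` with `L, N` nonzero objects of `E`. -/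
def SimpleIn (E : Set A) (M : A) : Prop :=
  ¬ IsZero M ∧ ∀ ⦃L N : A⦄ (i : L ⟶ M) (p : M ⟶ N) (w : i ≫ p = 0),
    (ShortComplex.mk i p w).ShortExact → L ∈ E → N ∈ E → IsZero L ∨ IsZero N

/-- The set of simple objects of `E`. -/
def simpSet (E : Set A) : Set A := {X | X ∈ E ∧ SimpleIn E X}

/-- `M` is left Schurian for `E`: nonzero, and every morphism from `M` to an object
of `E` is zero or a monomorphism. -/
def LeftSchurianFor (E : Set A) (M : A) : Prop :=
  ¬ IsZero M ∧ ∀ ⦃X : A⦄, X ∈ E → ∀ f : M ⟶ X, f = 0 ∨ Mono f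

/-- A monobrick: an iso-closed set of bricks such that every morphism between its
members is zero or a monomorphism. -/
def IsMonobrick (M : Set A) : Prop :=
  IsoClosedSet M ∧ (∀ X ∈ M, IsBrick X) ∧
  ∀ ⦃X : A⦄, X ∈ M → ∀ ⦃Y : A⦄, Y ∈ M → ∀ f : X ⟶ Y, f = 0 ∨ Mono f

/-- A semibrick: an iso-closed set of bricks such that every morphism between its
members is zero or an isomorphism. -/
def IsSemibrick (S : Set A) : Prop :=
  IsoClosedSet S ∧ (∀ X ∈ S, IsBrick X) ∧
  ∀ ⦃X : A⦄, X ∈ S → ∀ ⦃Y : A⦄, Y ∈ S → ∀ f : X ⟶ Y, f = 0 ∨ IsIso f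

/-- Membership in the extension closure `Filt C`: objects admitting a finite filtration with
subquotients in `C`, generated by objects isomorphic to members of `C`, zero objects, and
extensions. -/
inductive FiltMem (C : Set A) : A → Prop
  | of_iso {X Y : A} (h : Y ∈ C) (e : X ≅ Y) : FiltMem C X
  | of_isZero {X : A} (h : IsZero X) : FiltMem C X
  | of_extension {S : ShortComplex A} (hS : S.ShortExact)
      (h1 : FiltMem C S.X₁) (h3 : FiltMem C S.X₃) : FiltMem C S.X₂

/-- The extension closure of `C`. -/
def Filt (C : Set A) : Set A := {X | FiltMem C X}

/-- A left Schur subcategory: extension-closed (and iso-closed), and every simple object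
is left Schurian. -/
def IsLeftSchur (E : Set A) : Prop :=
  IsoClosedSet E ∧ ExtClosed E ∧ ∀ M ∈ E, SimpleIn E M → LeftSchurianFor E M

/-- A torsion-free class: closed under extensions and subobjects. -/
def IsTorsionFreeClass (F : Set A) : Prop :=
  IsoClosedSet F ∧ ExtClosed F ∧
  ∀ ⦃X Y : A⦄ (f : X ⟶ Y), Mono f → Y ∈ F → X ∈ F

/-- A wide subcategory: closed under extensions, kernels and cokernels. -/
def IsWide (W : Set A) : Prop :=
  IsoClosedSet W ∧ ExtClosed W ∧
  (∀ ⦃X Y : A⦄ (f : X ⟶ Y), X ∈ W → Y ∈ W → kernel f ∈ W) ∧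
  (∀ ⦃X Y : A⦄ (f : X ⟶ Y), X ∈ W → Y ∈ W → cokernel f ∈ W)

/-- The submodule order: `X ≤ Y` iff there is a monomorphism `X ↪ Y`. -/
def subOrder (X Y : A) : Prop := ∃ f : X ⟶ Y, Mono f

/-- The set of maximal elements of `M` with respect to the submodule order
(maximality up to isomorphism of iso-classes). -/
def maxSet (M : Set A) : Set A :=
  {X | X ∈ M ∧ ∀ Y ∈ M, subOrder X Y → subOrder Y X}

/-- `N` is a cofinal extension of the monobrick `M`. -/
def IsCofinalExt (M N : Set A) : Prop :=
  IsMonobrick N ∧ M ⊆ N ∧ ∀ X ∈ N, ∃ Y ∈ M, subOrder X Y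

/-- A cofinally closed monobrick: no cofinal extension other than itself. -/
def IsCofinallyClosed (M : Set A) : Prop :=
  IsMonobrick M ∧ ∀ N : Set A, IsCofinalExt M N → N = M

/-- The cofinal closure of `M`: the union of all cofinal extensions of `M`. -/
def cofClosure (M : Set A) : Set A :=
  {X | ∃ N : Set A, IsCofinalExt M N ∧ X ∈ N}

/-- All subobjects of objects of `C`. -/
def subClosure (C : Set A) : Set A := {X | ∃ Y ∈ C, subOrder X Y}


/-- `C * D`: objects `X` admitting a short exact sequence `0 → C → X → D → 0`
with `C ∈ C` and `D ∈ D`. -/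
def extStar (C D : Set A) : Set A :=
  {X | ∃ (C' D' : A) (f : C' ⟶ X) (g : X ⟶ D') (w : f ≫ g = 0),
    (ShortComplex.mk f g w).ShortExact ∧ C' ∈ C ∧ D' ∈ D}

theorem statement2 (C D : Set A) (M : A) (hM : ¬ IsZero M)
    (hC : LeftSchurianFor C M) (hD : LeftSchurianFor D M) :
    LeftSchurianFor (extStar C D) M := by
  refine ⟨hM, ?_⟩
  rintro X ⟨C', D', i, p, w, hS, hC', hD'⟩ f
  rcases hD.2 hD' (f ≫ p) with h | h
  · have := hS.mono_f
    obtain ⟨l, hl⟩ := hS.exact.lift' f h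
    rcases hC.2 hC' l with h0 | hmono
    · left; rw [← hl, h0, zero_comp]
    · right; rw [← hl]; exact mono_comp l i
  · right
    exact mono_of_mono f p

end MonobrickPaper
end

section
/- Let A be a length abelian category and E a subcategory closed under extensions, kernels, and images. Then E is left Schur: every simple object of E is left Schurian for E. -/
open CategoryTheory CategoryTheory.Limits

namespace MonobrickPaper

universe v u

variable {A : Type u} [Category.{v} A] [Abelian A]

theorem statement3 [∀ X : A, IsNoetherianObject X] [∀ X : A, IsArtinianObject X] (E : Set A)
    (hiso : IsoClosedSet E) (hext : ExtClosed E)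
    (hker : ∀ ⦃X Y : A⦄ (f : X ⟶ Y), X ∈ E → Y ∈ E → kernel f ∈ E)
    (him : ∀ ⦃X Y : A⦄ (f : X ⟶ Y), X ∈ E → Y ∈ E → image f ∈ E) :
    IsLeftSchur E := by
  refine ⟨hiso, hext, fun M hM hsimp => ⟨hsimp.1, fun X hX f => ?_⟩⟩
  set g := factorThruImage f with hg
  have himf : image f ∈ E := him f hM hX
  have hkg : kernel g ∈ E := hker g hM himf
  have hSE : (ShortComplex.mk (kernel.ι g) g (kernel.condition g)).ShortExact := by
    refine ShortComplex.ShortExact.mk' ?_ inferInstance inferInstance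
    exact ShortComplex.exact_of_f_is_kernel _ (kernelIsKernel g)
  rcases hsimp.2 (kernel.ι g) g (kernel.condition g) hSE hkg himf with h | h
  · right
    have : Mono g := Preadditive.mono_of_isZero_kernel g h
    have hfac : g ≫ image.ι f = f := image.fac f
    rw [← hfac]
    exact mono_comp _ _
  · left
    have : image.ι f = 0 := h.eq_zero_of_src _
    rw [← image.fac f, this, comp_zero]

end MonobrickPaper
end

section
/- Let A be a length abelian category and M a monobrick in A. Then for an object X of Filt(M), the following are equivalent: (1) X is simple in Filt(M); (2) X is isomorphic to an object of M; (3) X is left Schurian for Filt(M). -/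
open CategoryTheory CategoryTheory.Limits

namespace MonobrickPaper

universe v u

variable {A : Type u} [Category.{v} A] [Abelian A]

lemma isZero_of_mono_eq_zero {X Y : A} (f : X ⟶ Y) [Mono f] (h : f = 0) : IsZero X := by
  rw [IsZero.iff_id_eq_zero, ← cancel_mono f, h, comp_zero, zero_comp]

lemma isZero_of_epi_eq_zero {X Y : A} (f : X ⟶ Y) [Epi f] (h : f = 0) : IsZero Y := by
  rw [IsZero.iff_id_eq_zero, ← cancel_epi f, h, comp_zero, zero_comp]

lemma simpleIn_of_iso {E : Set A} {X Y : A} (e : X ≅ Y) (h : SimpleIn E X) : SimpleIn E Y := by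
  refine ⟨fun hz => h.1 (hz.of_iso e), fun L N i p w hSE hL hN => ?_⟩
  have w' : (i ≫ e.inv) ≫ (e.hom ≫ p) = 0 := by
    simp [Category.assoc, w]
  have φ : ShortComplex.mk (i ≫ e.inv) (e.hom ≫ p) w' ≅ ShortComplex.mk i p w :=
    ShortComplex.isoMk (Iso.refl L) e (Iso.refl N) (by simp) (by simp)
  exact h.2 (i ≫ e.inv) (e.hom ≫ p) w' (ShortComplex.shortExact_of_iso φ.symm hSE) hL hN

lemma schurian_to_simple {E : Set A} {X : A} (h : LeftSchurianFor E X) (hE : X ∈ E)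
    : SimpleIn E X := by
  refine ⟨h.1, fun L N i p w hSE hL hN => ?_⟩
  rcases h.2 hN p with h0 | hm
  · right
    haveI : Epi p := hSE.epi_g
    exact isZero_of_epi_eq_zero p h0
  · left
    have hi : i = 0 := by
      have := (hSE.exact.mono_g_iff).1 hm
      exact this
    haveI : Mono i := hSE.mono_f
    exact isZero_of_mono_eq_zero i hi

lemma schur_aux (M : Set A) (hM : IsMonobrick M) {Y : A} (hY : FiltMem M Y) :
    ∀ {Z : A}, Z ∈ M → ∀ f : Z ⟶ Y, f = 0 ∨ Mono f := by
  induction hY with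
  | of_iso h e =>
    intro Z hZ f
    rcases hM.2.2 hZ h (f ≫ e.hom) with h0 | hm
    · left
      have : (f ≫ e.hom) ≫ e.inv = 0 := by rw [h0, zero_comp]
      simpa using this
    · right
      exact mono_of_mono f e.hom
  | of_isZero h =>
    intro Z hZ f
    left
    exact h.eq_of_tgt f 0
  | of_extension hS h1 h3 ih1 ih3 =>
    intro Z hZ f
    rename_i S
    rcases ih3 hZ (f ≫ S.g) with h0 | hm
    · haveI := hS.mono_f
      rcases ih1 hZ (hS.exact.lift f h0) with g0 | gm
      · left
        rw [← hS.exact.lift_f f h0, g0, zero_comp]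
      · right
        haveI := gm
        rw [← hS.exact.lift_f f h0]
        exact mono_comp _ _
    · right
      exact mono_of_mono f S.g

lemma simple_to_iso (M : Set A) (hM : IsMonobrick M) {X : A} (hX : FiltMem M X) :
    SimpleIn (Filt M) X → ∃ Z ∈ M, Nonempty (X ≅ Z) := by
  induction hX with
  | of_iso h e => exact fun _ => ⟨_, h, ⟨e⟩⟩
  | of_isZero h => exact fun hs => absurd h hs.1
  | of_extension hS h1 h3 ih1 ih3 =>
    intro hs
    rename_i S
    rcases hs.2 S.f S.g S.zero hS h1 h3 with hz1 | hz3
    · haveI : IsIso S.g := hS.isIso_g_iff.2 hz1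
      obtain ⟨Z, hZ, ⟨e⟩⟩ := ih3 (simpleIn_of_iso (asIso S.g) hs)
      exact ⟨Z, hZ, ⟨asIso S.g ≪≫ e⟩⟩
    · haveI : IsIso S.f := hS.isIso_f_iff.2 hz3
      obtain ⟨Z, hZ, ⟨e⟩⟩ := ih1 (simpleIn_of_iso (asIso S.f).symm hs)
      exact ⟨Z, hZ, ⟨(asIso S.f).symm ≪≫ e⟩⟩

lemma iso_to_schurian (M : Set A) (hM : IsMonobrick M) {X : A}
    (h : ∃ Z ∈ M, Nonempty (X ≅ Z)) : LeftSchurianFor (Filt M) X := by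
  obtain ⟨Z, hZ, ⟨e⟩⟩ := h
  refine ⟨fun hz => (hM.2.1 Z hZ).1 (hz.of_iso e.symm), fun Y hY f => ?_⟩
  rcases schur_aux M hM hY hZ (e.inv ≫ f) with h0 | hm
  · left
    have : e.hom ≫ e.inv ≫ f = 0 := by rw [h0, comp_zero]
    simpa using this
  · right
    have : f = e.hom ≫ (e.inv ≫ f) := by simp
    rw [this]
    haveI := hm
    exact mono_comp _ _


theorem statement4 [∀ X : A, IsNoetherianObject X] [∀ X : A, IsArtinianObject X] (M : Set A) (hM : IsMonobrick M)
    (X : A) (hX : X ∈ Filt M) :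
    (SimpleIn (Filt M) X ↔ ∃ Z ∈ M, Nonempty (X ≅ Z)) ∧
    ((∃ Z ∈ M, Nonempty (X ≅ Z)) ↔ LeftSchurianFor (Filt M) X) := by
  constructor
  · constructor
    · exact simple_to_iso M hM hX
    · exact fun h => schurian_to_simple (iso_to_schurian M hM h) hX
  · constructor
    · exact iso_to_schurian M hM
    · exact fun h => simple_to_iso M hM hX (schurian_to_simple h hX)

end MonobrickPaper
end

section
/- Let A be a length abelian category. The assignments E ↦ simp(E) and M ↦ Filt(M) are mutually inverse bijections between the set of left Schur subcategories of A and the set of monobricks in A. -/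
open CategoryTheory CategoryTheory.Limits

namespace MonobrickPaper

universe v u

variable {A : Type u} [Category.{v} A] [Abelian A]

/-! ### Auxiliary lemmas -/

section Aux

lemma isZero_of_epi_zero {X Y : A} (f : X ⟶ Y) (hf : Epi f) (h0 : f = 0) : IsZero Y := by
  haveI := hf
  rw [IsZero.iff_id_eq_zero, ← cancel_epi f]
  simp [h0]

lemma isZero_of_mono_zero {X Y : A} (f : X ⟶ Y) (hf : Mono f) (h0 : f = 0) : IsZero X := by
  haveI := hf
  rw [IsZero.iff_id_eq_zero, ← cancel_mono f]
  simp [h0]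

lemma isIso_of_mono_of_section {X Y : A} (f : X ⟶ Y) (hf : Mono f) (u : Y ⟶ X)
    (hu : u ≫ f = 𝟙 Y) : IsIso f := by
  haveI := hf
  refine ⟨u, ?_, hu⟩
  rw [← cancel_mono f, Category.assoc, hu, Category.comp_id, Category.id_comp]

/-- Fitting-type lemma: a monic endomorphism of an artinian object is an isomorphism. -/
lemma isIso_of_mono_endo {X : A} [IsArtinianObject X] (f : X ⟶ X) (hf : Mono f) : IsIso f := by
  haveI := hf
  let pw : ℕ → (X ⟶ X) := fun n => Nat.rec (𝟙 X) (fun _ g => f ≫ g) n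
  have hpw : ∀ n, Mono (pw n) := by
    intro n
    induction n with
    | zero => exact inferInstanceAs (Mono (𝟙 X))
    | succ n ih => exact @mono_comp _ _ _ _ _ f hf _ ih
  let c : ℕ → Subobject X := fun n => @Subobject.mk _ _ _ _ (pw n) (hpw n)
  have hle : ∀ n, c (n + 1) ≤ c n := fun n =>
    @Subobject.mk_le_mk_of_comm _ _ _ _ _ _ _ (hpw (n + 1)) (hpw n) f rfl
  obtain ⟨_, ⟨n₀, rfl⟩, hmin⟩ :=
    (wellFounded_lt (α := Subobject X)).has_min (Set.range c) ⟨c 0, 0, rfl⟩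
  have heq : c (n₀ + 1) = c n₀ := eq_of_le_of_not_lt (hle n₀) (hmin _ ⟨n₀ + 1, rfl⟩)
  have hge : c n₀ ≤ c (n₀ + 1) := le_of_eq heq.symm
  have hu : (@Subobject.ofMkLEMk _ _ _ _ _ (pw n₀) (pw (n₀ + 1)) (hpw n₀) (hpw (n₀ + 1)) hge) ≫
      pw (n₀ + 1) = pw n₀ :=
    @Subobject.ofMkLEMk_comp _ _ _ _ _ _ _ (hpw n₀) (hpw (n₀ + 1)) hge
  set u := @Subobject.ofMkLEMk _ _ _ _ _ (pw n₀) (pw (n₀ + 1)) (hpw n₀) (hpw (n₀ + 1)) hge with hudef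
  have hstep : pw (n₀ + 1) = f ≫ pw n₀ := rfl
  rw [hstep] at hu
  have hsec : u ≫ f = 𝟙 X :=
    (hpw n₀).right_cancellation (u ≫ f) (𝟙 X)
      (by rw [Category.assoc, hu, Category.id_comp])
  exact isIso_of_mono_of_section f hf u hsec

/-- Transport of short exactness along an isomorphism of the middle object. -/
lemma shortExact_iso_middle {S : ShortComplex A} (hS : S.ShortExact) {Y : A} (e : S.X₂ ≅ Y) :
    (ShortComplex.mk (S.f ≫ e.hom) (e.inv ≫ S.g)
      (by rw [Category.assoc, Iso.hom_inv_id_assoc, S.zero])).ShortExact := by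
  refine ShortComplex.shortExact_of_iso ?_ hS
  exact ShortComplex.isoMk (Iso.refl _) e (Iso.refl _) (by simp) (by simp)

lemma simpleIn_iso {E : Set A} {X Y : A} (h : SimpleIn E X) (e : X ≅ Y) : SimpleIn E Y := by
  refine ⟨fun h0 => h.1 (h0.of_iso e), ?_⟩
  intro L N i p w hSE hL hN
  have hSE' := shortExact_iso_middle hSE e.symm
  exact h.2 (i ≫ e.inv) (e.hom ≫ p)
    (by rw [Category.assoc, Iso.inv_hom_id_assoc, w]) hSE' hL hN

lemma FiltMem.iso {C : Set A} {X Y : A} (h : FiltMem C X) (e : X ≅ Y) : FiltMem C Y := by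
  induction h generalizing Y with
  | @of_iso X' Z hZ e' => exact .of_iso hZ (e.symm ≪≫ e')
  | of_isZero h0 => exact .of_isZero (h0.of_iso e.symm)
  | @of_extension S hS h1 h3 ih1 ih3 => exact .of_extension (shortExact_iso_middle hS e) h1 h3

/-- Every morphism from a member of a monobrick to an object of its extension closure is
zero or a monomorphism. -/
lemma mono_or_zero_from_brick {M : Set A} (hM : IsMonobrick M) {B : A} (hB : B ∈ M)
    {X : A} (hX : FiltMem M X) : ∀ f : B ⟶ X, f = 0 ∨ Mono f := by
  induction hX with
  | @of_iso X' Z hZ e =>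
    intro f
    have hfe : f = (f ≫ e.hom) ≫ e.inv := by simp
    rcases hM.2.2 hB hZ (f ≫ e.hom) with h | h
    · left; rw [hfe, h, zero_comp]
    · right; rw [hfe]; exact @mono_comp _ _ _ _ _ _ h _ inferInstance
  | of_isZero h0 => intro f; exact Or.inl (h0.eq_of_tgt f 0)
  | @of_extension S hS h1 h3 ih1 ih3 =>
    intro f
    by_cases hfg : f ≫ S.g = 0
    · obtain ⟨l, hl⟩ := KernelFork.IsLimit.lift' hS.fIsKernel f hfg
      simp only [Fork.ι_ofι] at hl
      rcases ih1 l with h | h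
      · left; rw [← hl, h, zero_comp]
      · right; rw [← hl]; exact @mono_comp _ _ _ _ _ _ h _ hS.mono_f
    · rcases ih3 (f ≫ S.g) with h | h
      · exact absurd h hfg
      · right; haveI := h; exact mono_of_mono f S.g

/-- A nonzero object of the extension closure of a monobrick admits a monomorphism from a
nonzero member of the monobrick. -/
lemma exists_brick_sub {M : Set A} (hM : IsMonobrick M) {X : A} (hX : FiltMem M X) :
    ¬ IsZero X → ∃ B, B ∈ M ∧ ¬ IsZero B ∧ ∃ f : B ⟶ X, Mono f := by
  induction hX with
  | @of_iso X' Z hZ e =>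
    intro hX0
    exact ⟨Z, hZ, fun h => hX0 (h.of_iso e), e.inv, inferInstance⟩
  | of_isZero h0 => intro hX0; exact absurd h0 hX0
  | @of_extension S hS h1 h3 ih1 ih3 =>
    intro hX0
    by_cases h0 : IsZero S.X₁
    · have hf0 : S.f = 0 := h0.eq_of_src _ _
      haveI : Mono S.g := hS.exact.mono_g hf0
      haveI : Epi S.g := hS.epi_g
      haveI : IsIso S.g := isIso_of_mono_of_epi _
      have hX3 : ¬ IsZero S.X₃ := fun h => hX0 (h.of_iso (asIso S.g))
      obtain ⟨B, hB, hB0, f, hf⟩ := ih3 hX3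
      haveI := hf
      exact ⟨B, hB, hB0, f ≫ inv S.g, mono_comp _ _⟩
    · obtain ⟨B, hB, hB0, f, hf⟩ := ih1 h0
      haveI := hf; haveI := hS.mono_f
      exact ⟨B, hB, hB0, f ≫ S.f, mono_comp _ _⟩

lemma simpSet_filt {M : Set A} (hM : IsMonobrick M) : simpSet (Filt M) = M := by
  ext X
  constructor
  · rintro ⟨hXF, hXs⟩
    revert hXs
    induction hXF with
    | @of_iso X' Z hZ e => exact fun _ => hM.1 e.symm hZ
    | of_isZero h0 => exact fun hs => absurd h0 hs.1
    | @of_extension S hS h1 h3 ih1 ih3 =>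
      intro hs
      rcases hs.2 S.f S.g S.zero hS h1 h3 with h0 | h0
      · have hf0 : S.f = 0 := h0.eq_of_src _ _
        haveI : Mono S.g := hS.exact.mono_g hf0
        haveI : Epi S.g := hS.epi_g
        haveI : IsIso S.g := isIso_of_mono_of_epi _
        exact hM.1 (asIso S.g).symm (ih3 (simpleIn_iso hs (asIso S.g)))
      · have hg0 : S.g = 0 := h0.eq_of_tgt _ _
        haveI : Mono S.f := hS.mono_f
        haveI : Epi S.f := hS.exact.epi_f hg0
        haveI : IsIso S.f := isIso_of_mono_of_epi _
        exact hM.1 (asIso S.f) (ih1 (simpleIn_iso hs (asIso S.f).symm))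
  · intro hXM
    refine ⟨.of_iso hXM (Iso.refl X), (hM.2.1 X hXM).1, ?_⟩
    intro L N i p w hSE hL hN
    by_cases hN0 : IsZero N
    · exact Or.inr hN0
    have hp0 : p ≠ 0 := fun h => hN0 (isZero_of_epi_zero p hSE.epi_g h)
    rcases mono_or_zero_from_brick hM hXM hN p with h | h
    · exact absurd h hp0
    · haveI := h; haveI := hSE.epi_g
      haveI : IsIso p := isIso_of_mono_of_epi p
      have hi0 : i = 0 := by rw [← cancel_mono p, w, zero_comp]
      exact Or.inl (isZero_of_mono_zero i hSE.mono_f hi0)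

lemma filt_leftSchur {M : Set A} (hM : IsMonobrick M) : IsLeftSchur (Filt M) := by
  refine ⟨fun X Y e hX => FiltMem.iso hX e,
    ⟨fun X h => .of_isZero h, fun S hS h1 h3 => .of_extension hS h1 h3⟩, ?_⟩
  intro B hB hBs
  have hBM : B ∈ M := by
    rw [← simpSet_filt hM]
    exact ⟨hB, hBs⟩
  exact ⟨hBs.1, fun X hX f => mono_or_zero_from_brick hM hBM hX f⟩

lemma simp_monobrick [∀ X : A, IsArtinianObject X] {E : Set A} (hE : IsLeftSchur E) :
    IsMonobrick (simpSet E) := by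
  refine ⟨?_, ?_, ?_⟩
  · rintro X Y e ⟨hXE, hXs⟩
    exact ⟨hE.1 e hXE, simpleIn_iso hXs e⟩
  · rintro X ⟨hXE, hXs⟩
    refine ⟨hXs.1, fun f => ?_⟩
    rcases (hE.2.2 X hXE hXs).2 hXE f with h | h
    · exact Or.inl h
    · exact Or.inr (isIso_of_mono_endo f h)
  · rintro X ⟨hXE, hXs⟩ Y ⟨hYE, _⟩ f
    exact (hE.2.2 X hXE hXs).2 hYE f

/-- The relation "proper subobject". -/
def properSub (Y X : A) : Prop := ∃ f : Y ⟶ X, Mono f ∧ ¬ IsIso f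

lemma acc_properSub [∀ X : A, IsArtinianObject X] (X : A) : Acc (properSub (A := A)) X := by
  suffices h : ∀ s : Subobject X, ∀ Y : A, (Y ≅ (s : A)) → Acc (properSub (A := A)) Y by
    exact h (Subobject.mk (𝟙 X)) X (Subobject.underlyingIso (𝟙 X)).symm
  intro s
  refine (wellFounded_lt (α := Subobject X)).induction
    (C := fun s => ∀ Y : A, (Y ≅ (s : A)) → Acc (properSub (A := A)) Y) s ?_
  rintro s IH Y e
  constructor
  rintro Z ⟨g, hg, hgn⟩
  haveI := hg
  have hmm : Mono (g ≫ e.hom ≫ s.arrow) := by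
    haveI : Mono (e.hom ≫ s.arrow) := mono_comp _ _
    exact mono_comp _ _
  have ht : @Subobject.mk _ _ _ _ (g ≫ e.hom ≫ s.arrow) hmm ≤ s := by
    conv_rhs => rw [← Subobject.mk_arrow s]
    exact @Subobject.mk_le_mk_of_comm _ _ _ _ _ _ _ hmm _ (g ≫ e.hom) (by simp)
  have hne : @Subobject.mk _ _ _ _ (g ≫ e.hom ≫ s.arrow) hmm ≠ s := by
    intro hmk
    have hles : s ≤ @Subobject.mk _ _ _ _ (g ≫ e.hom ≫ s.arrow) hmm := le_of_eq hmk.symm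
    have hles' : Subobject.mk s.arrow ≤ @Subobject.mk _ _ _ _ (g ≫ e.hom ≫ s.arrow) hmm := by
      rwa [Subobject.mk_arrow s]
    have hu : (@Subobject.ofMkLEMk _ _ _ _ _ s.arrow (g ≫ e.hom ≫ s.arrow) _ hmm hles') ≫
        (g ≫ e.hom ≫ s.arrow) = s.arrow :=
      @Subobject.ofMkLEMk_comp _ _ _ _ _ _ _ _ hmm hles'
    set u := @Subobject.ofMkLEMk _ _ _ _ _ s.arrow (g ≫ e.hom ≫ s.arrow) _ hmm hles' with hudef
    have hu' : (u ≫ g ≫ e.hom) ≫ s.arrow = 𝟙 _ ≫ s.arrow := by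
      simpa [Category.assoc] using hu
    have hu'' : u ≫ g ≫ e.hom = 𝟙 _ := by
      rwa [cancel_mono s.arrow] at hu'
    have hsec : (e.hom ≫ u) ≫ g = 𝟙 Y := by
      rw [← cancel_mono e.hom]
      simp only [Category.assoc, hu'']
      simp
    exact hgn (isIso_of_mono_of_section g hg (e.hom ≫ u) hsec)
  exact IH _ (lt_of_le_of_ne ht hne) Z
    (@Subobject.underlyingIso _ _ _ _ (g ≫ e.hom ≫ s.arrow) hmm).symm

lemma mem_filt_of_mem [∀ X : A, IsNoetherianObject X] [∀ X : A, IsArtinianObject X]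
    {E : Set A} (hE : IsLeftSchur E) {X : A} (hX : X ∈ E) : FiltMem (simpSet E) X := by
  have wf : WellFounded (properSub (A := A)) := ⟨acc_properSub⟩
  suffices main : ∀ X : A, ∀ N (q : X ⟶ N), Epi q → N ∈ E → FiltMem (simpSet E) N by
    exact main X X (𝟙 X) inferInstance hX
  intro X
  refine wf.induction
    (C := fun X => ∀ N (q : X ⟶ N), Epi q → N ∈ E → FiltMem (simpSet E) N) X ?_
  clear hX X
  intro X IHout
  suffices h : ∀ s : Subobject X, ∀ N (q : X ⟶ N), Epi q → kernelSubobject q = s →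
      N ∈ E → FiltMem (simpSet E) N by
    intro N q hq hNE
    exact h _ N q hq rfl hNE
  intro s
  refine (wellFounded_gt (α := Subobject X)).induction
    (C := fun s => ∀ N (q : X ⟶ N), Epi q → kernelSubobject q = s →
      N ∈ E → FiltMem (simpSet E) N) s ?_
  intro s IHin N q hq hker hNE
  haveI := hq
  by_cases hN0 : IsZero N
  · exact .of_isZero hN0
  by_cases hNs : SimpleIn E N
  · exact .of_iso (⟨hNE, hNs⟩ : N ∈ simpSet E) (Iso.refl N)
  have hex : ∃ (L : A) (N' : A) (i : L ⟶ N) (p : N ⟶ N') (w : i ≫ p = 0),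
      (ShortComplex.mk i p w).ShortExact ∧ L ∈ E ∧ N' ∈ E ∧ ¬IsZero L ∧ ¬IsZero N' := by
    by_contra hcon
    push_neg at hcon
    refine hNs ⟨hN0, ?_⟩
    intro L N' i p w hSE hL hN'
    by_contra hno
    push_neg at hno
    exact hno.2 (hcon L N' i p w hSE hL hN' hno.1)
  obtain ⟨L, N', i, p, w, hSE, hL, hN', hL0, hN'0⟩ := hex
  haveI : Mono i := hSE.mono_f
  haveI : Epi p := hSE.epi_g
  -- The third term `N'` is a quotient of `X` with strictly larger kernel.
  have hkle : kernelSubobject q ≤ kernelSubobject (q ≫ p) := kernelSubobject_comp_le q p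
  have hknle : ¬ kernelSubobject (q ≫ p) ≤ kernelSubobject q := by
    intro hle
    have hc : pullback.snd i q ≫ (q ≫ p) = 0 := by
      rw [← Category.assoc, ← pullback.condition, Category.assoc, w, comp_zero]
    have h2 : pullback.snd i q ≫ q = 0 := by
      have hfac := factorThruKernelSubobject_comp_arrow (q ≫ p) (pullback.snd i q) hc
      rw [← hfac, Category.assoc, ← Subobject.ofLE_arrow hle]
      simp only [Category.assoc]
      rw [kernelSubobject_arrow_comp, comp_zero, comp_zero]
    have h3 : pullback.fst i q ≫ i = 0 := by rw [pullback.condition, h2]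
    have hf0 : pullback.fst i q = 0 := by
      rw [← cancel_mono i, zero_comp]; exact h3
    exact hL0 (isZero_of_epi_zero _ inferInstance hf0)
  have hklt : s < kernelSubobject (q ≫ p) := by
    rw [← hker]
    exact lt_of_le_not_ge hkle fun h => hknle h
  have hN'F : FiltMem (simpSet E) N' :=
    IHin (kernelSubobject (q ≫ p)) hklt N' (q ≫ p) (epi_comp _ _) rfl hN'
  -- The first term `L` is a quotient of a proper subobject of `X`.
  have hPX : properSub (pullback i q) X := by
    refine ⟨pullback.snd i q, inferInstance, ?_⟩
    intro hiso
    haveI : Epi (pullback.snd i q ≫ q) := epi_comp _ _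
    haveI : Epi (pullback.fst i q ≫ i) := by rw [pullback.condition]; infer_instance
    haveI : Epi i := epi_of_epi (pullback.fst i q) i
    haveI : IsIso i := isIso_of_mono_of_epi i
    have hp0 : p = 0 := by rw [← cancel_epi i, w, comp_zero]
    exact hN'0 (isZero_of_epi_zero p hSE.epi_g hp0)
  have hLF : FiltMem (simpSet E) L :=
    IHout (pullback i q) hPX L (pullback.fst i q) inferInstance hL
  exact .of_extension hSE hLF hN'F

lemma filt_simpSet [∀ X : A, IsNoetherianObject X] [∀ X : A, IsArtinianObject X]
    {E : Set A} (hE : IsLeftSchur E) : Filt (simpSet E) = E := by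
  ext X
  constructor
  · intro hX
    induction hX with
    | @of_iso X' Z hZ e => exact hE.1 e.symm hZ.1
    | of_isZero h0 => exact hE.2.1.1 _ h0
    | @of_extension S hS h1 h3 ih1 ih3 => exact hE.2.1.2 S hS ih1 ih3
  · exact mem_filt_of_mem hE

end Aux

theorem statement5 [∀ X : A, IsNoetherianObject X] [∀ X : A, IsArtinianObject X] :
    (∀ E : Set A, IsLeftSchur E → IsMonobrick (simpSet E)) ∧
    (∀ M : Set A, IsMonobrick M → IsLeftSchur (Filt M)) ∧
    (∀ E : Set A, IsLeftSchur E → Filt (simpSet E) = E) ∧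
    (∀ M : Set A, IsMonobrick M → simpSet (Filt M) = M) :=
  ⟨fun E hE => simp_monobrick hE, fun M hM => filt_leftSchur hM,
   fun E hE => filt_simpSet hE, fun M hM => simpSet_filt hM⟩

end MonobrickPaper
end

section
/- Let M be a monobrick in a length abelian category A, and let {N_i : i ∈ I} be a family of cofinal extensions of M. Then the union of the N_i is again a cofinal extension of M; in particular, the union is a monobrick. -/
open CategoryTheory CategoryTheory.Limits

namespace MonobrickPaper

universe v u

variable {A : Type u} [Category.{v} A] [Abelian A]

theorem statement7 [∀ X : A, IsNoetherianObject X] [∀ X : A, IsArtinianObject X] (M : Set A) (hM : IsMonobrick M)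
    {I : Type*} [Nonempty I] (N : I → Set A)
    (hN : ∀ i : I, IsCofinalExt M (N i)) :
    IsCofinalExt M (⋃ i : I, N i) := by
  refine ⟨⟨?_, ?_, ?_⟩, ?_, ?_⟩
  · intro X Y e hX
    obtain ⟨i, hXS⟩ := Set.mem_iUnion.mp hX
    exact Set.mem_iUnion.mpr ⟨i, (hN i).1.1 e hXS⟩
  · intro X hX
    obtain ⟨i, hXS⟩ := Set.mem_iUnion.mp hX
    exact (hN i).1.2.1 X hXS
  · intro X hX Y hY f
    obtain ⟨i, hXS⟩ := Set.mem_iUnion.mp hX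
    obtain ⟨j, hYT⟩ := Set.mem_iUnion.mp hY
    -- Y embeds into some M₀ ∈ M ⊆ N i
    obtain ⟨M₀, hM₀, m, hm⟩ := (hN j).2.2 Y hYT
    have hM₀i : M₀ ∈ N i := (hN i).2.1 hM₀
    rcases (hN i).1.2.2 hXS hM₀i (f ≫ m) with h | h
    · left
      haveI := hm
      exact (cancel_mono m).mp (by simpa using h)
    · right
      exact mono_of_mono f m
  · intro X hX
    exact Set.mem_iUnion.mpr ⟨Classical.arbitrary I, (hN _).2.1 hX⟩
  · intro X hX
    obtain ⟨i, hXS⟩ := Set.mem_iUnion.mp hX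
    exact (hN i).2.2 X hXS

end MonobrickPaper
end

section
/- Let M be a monobrick in a length abelian category A, and let N be a brick such that (i) there is a monomorphism N ↪ M for some M ∈ M, and (ii) every morphism N → M' with M' ∈ M is zero or a monomorphism. Then M ∪ {N} is a cofinal extension of M; in particular, it is a monobrick. -/
open CategoryTheory CategoryTheory.Limits

namespace MonobrickPaper

universe v u

variable {A : Type u} [Category.{v} A] [Abelian A]

theorem statement8 [∀ X : A, IsNoetherianObject X] [∀ X : A, IsArtinianObject X] (M : Set A) (hM : IsMonobrick M)
    (N : A) (hN : IsBrick N)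
    (h1 : ∃ X ∈ M, subOrder N X)
    (h2 : ∀ ⦃X : A⦄, X ∈ M → ∀ f : N ⟶ X, f = 0 ∨ Mono f) :
    IsCofinalExt M (M ∪ {Z : A | Nonempty (Z ≅ N)}) := by
  obtain ⟨X₀, hX₀, m, hm⟩ := h1
  haveI : Mono m := hm
  refine ⟨⟨?_, ?_, ?_⟩, Set.subset_union_left, ?_⟩
  · rintro X Y e (hX | he')
    · exact Or.inl (hM.1 e hX)
    · obtain ⟨e'⟩ := he'
      exact Or.inr ⟨e.symm.trans e'⟩
  · rintro X (hX | he)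
    · exact hM.2.1 X hX
    · obtain ⟨e⟩ := he
      refine ⟨fun hZ => hN.1 (hZ.of_iso e.symm), fun f => ?_⟩
      rcases hN.2 (e.inv ≫ f ≫ e.hom) with h | h
      · left
        have hf : e.hom ≫ (e.inv ≫ f ≫ e.hom) ≫ e.inv = f := by simp
        rw [← hf, h]; simp
      · right
        have hf : f = e.hom ≫ (e.inv ≫ f ≫ e.hom) ≫ e.inv := by simp
        rw [hf]; infer_instance
  · rintro X (hX | heX) Y (hY | heY) f
    · exact hM.2.2 hX hY f
    · -- X ∈ M, Y ≅ N
      obtain ⟨eY⟩ := heY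
      haveI : Mono (eY.hom ≫ m) := mono_comp _ _
      rcases hM.2.2 hX hX₀ (f ≫ eY.hom ≫ m) with h | h
      · exact Or.inl (zero_of_comp_mono (eY.hom ≫ m) h)
      · haveI := h
        exact Or.inr (mono_of_mono f (eY.hom ≫ m))
    · -- X ≅ N, Y ∈ M
      obtain ⟨eX⟩ := heX
      rcases h2 hY (eX.inv ≫ f) with h | h
      · left
        have hf : eX.hom ≫ (eX.inv ≫ f) = f := by simp
        rw [← hf, h]; simp
      · haveI := h
        right
        have hf : f = eX.hom ≫ (eX.inv ≫ f) := by simp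
        rw [hf]; exact mono_comp _ _
    · -- both ≅ N
      obtain ⟨eX⟩ := heX
      obtain ⟨eY⟩ := heY
      rcases hN.2 (eX.inv ≫ f ≫ eY.hom) with h | h
      · left
        have hf : eX.hom ≫ (eX.inv ≫ f ≫ eY.hom) ≫ eY.inv = f := by simp
        rw [← hf, h]; simp
      · right
        haveI := h
        have hf : f = eX.hom ≫ (eX.inv ≫ f ≫ eY.hom) ≫ eY.inv := by simp
        rw [hf]; infer_instance
  · rintro X (hX | he)
    · exact ⟨X, hX, 𝟙 X, inferInstance⟩
    · obtain ⟨e⟩ := he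
      exact ⟨X₀, hX₀, e.hom ≫ m, mono_comp _ _⟩

end MonobrickPaper
end

section
/- Let M be a monobrick in a length abelian category A. Then the union of all cofinal extensions of M (the cofinal closure of M) is itself a cofinal extension of M and is cofinally closed, i.e., admits no proper cofinal extension. Moreover, any cofinally closed cofinal extension of M equals the cofinal closure of M. -/
open CategoryTheory CategoryTheory.Limits

namespace MonobrickPaper

universe v u

variable {A : Type u} [Category.{v} A] [Abelian A]

theorem statement9 [∀ X : A, IsNoetherianObject X] [∀ X : A, IsArtinianObject X] (M : Set A) (hM : IsMonobrick M) :
    IsCofinalExt M (cofClosure M) ∧ IsCofinallyClosed (cofClosure M) ∧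
    ∀ N : Set A, IsCofinalExt M N → IsCofinallyClosed N → N = cofClosure M := by
  -- M is a cofinal extension of itself
  have hself : IsCofinalExt M M :=
    ⟨hM, le_refl M, fun X hX => ⟨X, hX, 𝟙 X, inferInstance⟩⟩
  have hMsub : M ⊆ cofClosure M := fun X hX => ⟨M, hself, hX⟩
  -- cofClosure M is a monobrick
  have hmono : IsMonobrick (cofClosure M) := by
    refine ⟨?_, ?_, ?_⟩
    · rintro X Y e ⟨N, hN, hX⟩
      exact ⟨N, hN, hN.1.1 e hX⟩
    · rintro X ⟨N, hN, hX⟩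
      exact hN.1.2.1 X hX
    · rintro X ⟨N₁, hN₁, hX⟩ Y ⟨N₂, hN₂, hY⟩ f
      obtain ⟨Z, hZM, ι, hι⟩ := hN₂.2.2 Y hY
      have hZ : Z ∈ N₁ := hN₁.2.1 hZM
      rcases hN₁.1.2.2 hX hZ (f ≫ ι) with h | h
      · left
        haveI := hι
        have : f ≫ ι = 0 ≫ ι := by simpa using h
        exact (cancel_mono ι).mp this
      · right
        haveI := hι
        haveI := h
        exact mono_of_mono f ι
  -- cofClosure M is a cofinal extension of M
  have hcof : IsCofinalExt M (cofClosure M) := by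
    refine ⟨hmono, hMsub, ?_⟩
    rintro X ⟨N, hN, hX⟩
    exact hN.2.2 X hX
  -- any cofinal extension of cofClosure M is a cofinal extension of M
  have hstep : ∀ N' : Set A, IsCofinalExt (cofClosure M) N' → IsCofinalExt M N' := by
    intro N' hN'
    refine ⟨hN'.1, le_trans hMsub hN'.2.1, ?_⟩
    intro X hX
    obtain ⟨Y, hY, g, hg⟩ := hN'.2.2 X hX
    obtain ⟨Z, hZ, h, hh⟩ := hcof.2.2 Y hY
    haveI := hg; haveI := hh
    exact ⟨Z, hZ, g ≫ h, inferInstance⟩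
  have hclosed : IsCofinallyClosed (cofClosure M) := by
    refine ⟨hmono, fun N' hN' => ?_⟩
    apply Set.Subset.antisymm
    · intro X hX
      exact ⟨N', hstep N' hN', hX⟩
    · exact hN'.2.1
  refine ⟨hcof, hclosed, ?_⟩
  intro N hN hNc
  -- cofClosure M is a cofinal extension of N
  have : IsCofinalExt N (cofClosure M) := by
    refine ⟨hmono, fun X hX => ⟨N, hN, hX⟩, ?_⟩
    intro X hX
    obtain ⟨Y, hY, g, hg⟩ := hcof.2.2 X hX
    exact ⟨Y, hN.2.1 hY, g, hg⟩
  exact (hNc.2 _ this).symm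

end MonobrickPaper
end
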